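/- arXiv:1411.4987 — 2 statements merged into one kernel-verified Lean document; each statement's English description precedes it below -/
import Mathlib

section
/- Let X, Y, Z be compact Hausdorff spaces and let A, B, D be MV-subalgebras of C(X), C(Y), C(Z) respectively. For every f ∈ A ⊗ B and every d ∈ D, the function ((x,y),z) ↦ f(x,y)·d(z) belongs to the MV-subalgebra of C((X×Y)×Z) generated by the set {((x,y),z) ↦ a(x)·b(y)·d(z) : a ∈ A, b ∈ B, d ∈ D}. -/
open Set

/-- `A` is an MV-subalgebra of `C(X, ℝ)`: a set of continuous `[0,1]`-valued functions
containing `0` and closed under `f ⊕ g = (f + g) ⊓ 1` and `f* = 1 - f`. -/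
def IsMVSub {X : Type*} [TopologicalSpace X] (A : Set C(X, ℝ)) : Prop :=
  (∀ f ∈ A, ∀ x, f x ∈ Icc (0:ℝ) 1) ∧
  (0 : C(X, ℝ)) ∈ A ∧
  (∀ f ∈ A, ∀ g ∈ A, (f + g) ⊓ 1 ∈ A) ∧
  (∀ f ∈ A, 1 - f ∈ A)

/-- The smallest MV-subalgebra of `C(X, ℝ)` containing `S`. -/
def mvGen {X : Type*} [TopologicalSpace X] (S : Set C(X, ℝ)) : Set C(X, ℝ) :=
  ⋂₀ {A | IsMVSub A ∧ S ⊆ A}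

lemma mvGen_le {X : Type*} [TopologicalSpace X] {S A : Set C(X, ℝ)}
    (hA : IsMVSub A) (hS : S ⊆ A) : mvGen S ⊆ A :=
  fun _ hf => Set.mem_sInter.mp hf A ⟨hA, hS⟩

lemma subset_mvGen {X : Type*} [TopologicalSpace X] (S : Set C(X, ℝ)) : S ⊆ mvGen S :=
  fun _ hf => Set.mem_sInter.mpr fun _ hA => hA.2 hf

lemma isMVSub_full {X : Type*} [TopologicalSpace X] :
    IsMVSub {f : C(X, ℝ) | ∀ x, f x ∈ Icc (0:ℝ) 1} := by
  refine ⟨fun f hf => hf, fun x => by simp, ?_, ?_⟩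
  · intro f hf g hg x
    have h1 := hf x; have h2 := hg x
    simp only [ContinuousMap.inf_apply, ContinuousMap.add_apply, ContinuousMap.one_apply,
      mem_Icc] at *
    constructor
    · exact le_min (by linarith) (by linarith)
    · exact min_le_right _ _
  · intro f hf x
    have h1 := hf x
    simp only [ContinuousMap.sub_apply, ContinuousMap.one_apply, mem_Icc] at *
    constructor <;> linarith

lemma mvGen_isMVSub {X : Type*} [TopologicalSpace X] {S : Set C(X, ℝ)}
    (hS : ∀ f ∈ S, ∀ x, f x ∈ Icc (0:ℝ) 1) : IsMVSub (mvGen S) := by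
  refine ⟨?_, ?_, ?_, ?_⟩
  · exact fun f hf => mvGen_le isMVSub_full hS hf
  · exact Set.mem_sInter.mpr fun A hA => hA.1.2.1
  · intro f hf g hg
    exact Set.mem_sInter.mpr fun A hA =>
      hA.1.2.2.1 f (Set.mem_sInter.mp hf A hA) g (Set.mem_sInter.mp hg A hA)
  · intro f hf
    exact Set.mem_sInter.mpr fun A hA => hA.1.2.2.2 f (Set.mem_sInter.mp hf A hA)

lemma inf_mem_of_isMVSub {X : Type*} [TopologicalSpace X] {M : Set C(X, ℝ)}
    (hM : IsMVSub M) {u v : C(X, ℝ)} (hu : u ∈ M) (hv : v ∈ M) : u ⊓ v ∈ M := by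
  have key : u ⊓ v = 1 - (((1 - ((u + (1 - v)) ⊓ 1)) + (1 - v)) ⊓ 1) := by
    ext x
    obtain ⟨hu0, hu1⟩ := hM.1 u hu x
    obtain ⟨hv0, hv1⟩ := hM.1 v hv x
    simp only [ContinuousMap.inf_apply, ContinuousMap.sub_apply, ContinuousMap.add_apply,
      ContinuousMap.one_apply]
    rcases le_total (u x) (v x) with h | h
    · rw [inf_eq_left.mpr h, inf_eq_left.mpr (by linarith : u x + (1 - v x) ≤ 1)]
      rw [inf_eq_left.mpr (by linarith)]
      ring
    · rw [inf_eq_right.mpr h, inf_eq_right.mpr (by linarith : (1:ℝ) ≤ u x + (1 - v x))]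
      rw [inf_eq_left.mpr (by linarith : 1 - 1 + (1 - v x) ≤ 1)]
      ring
  rw [key]
  exact hM.2.2.2 _ (hM.2.2.1 _ (hM.2.2.2 _ (hM.2.2.1 u hu _ (hM.2.2.2 v hv))) _ (hM.2.2.2 v hv))

/-- The semisimple tensor product of MV-subalgebras `A ⊆ C(X, ℝ)` and `B ⊆ C(Y, ℝ)`:
the MV-subalgebra of `C(X × Y, ℝ)` generated by the pointwise products `(x,y) ↦ a x * b y`. -/
def mvTens {X Y : Type*} [TopologicalSpace X] [TopologicalSpace Y]
    (A : Set C(X, ℝ)) (B : Set C(Y, ℝ)) : Set C(X × Y, ℝ) :=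
  mvGen {h | ∃ a ∈ A, ∃ b ∈ B, ∀ p : X × Y, h p = a p.1 * b p.2}

/-- for every `f ∈ A ⊗ B` and `d ∈ D`, the function
`((x,y),z) ↦ f (x,y) * d z` lies in the MV-subalgebra of `C((X × Y) × Z, ℝ)` generated
by the triple products `((x,y),z) ↦ a x * b y * d z`. -/
theorem stmt1 {X Y Z : Type*}
    [TopologicalSpace X] [CompactSpace X] [T2Space X]
    [TopologicalSpace Y] [CompactSpace Y] [T2Space Y]
    [TopologicalSpace Z] [CompactSpace Z] [T2Space Z]
    (A : Set C(X, ℝ)) (B : Set C(Y, ℝ)) (D : Set C(Z, ℝ))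
    (hA : IsMVSub A) (hB : IsMVSub B) (hD : IsMVSub D)
    (f : C(X × Y, ℝ)) (hf : f ∈ mvTens A B) (d : C(Z, ℝ)) (hd : d ∈ D)
    (g : C((X × Y) × Z, ℝ)) (hg : ∀ p : (X × Y) × Z, g p = f p.1 * d p.2) :
    g ∈ mvGen {h : C((X × Y) × Z, ℝ) |
      ∃ a ∈ A, ∃ b ∈ B, ∃ e ∈ D, ∀ p : (X × Y) × Z, h p = a p.1.1 * b p.1.2 * e p.2} := by
  set Gen : Set C((X × Y) × Z, ℝ) := {h | ∃ a ∈ A, ∃ b ∈ B, ∃ e ∈ D,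
      ∀ p : (X × Y) × Z, h p = a p.1.1 * b p.1.2 * e p.2} with hGenDef
  have hGenBd : ∀ h ∈ Gen, ∀ p, h p ∈ Icc (0:ℝ) 1 := by
    rintro h ⟨a, ha, b, hb, e, he, hh⟩ p
    obtain ⟨ha0, ha1⟩ := hA.1 a ha p.1.1
    obtain ⟨hb0, hb1⟩ := hB.1 b hb p.1.2
    obtain ⟨he0, he1⟩ := hD.1 e he p.2
    rw [hh]
    refine ⟨by positivity, ?_⟩
    calc a p.1.1 * b p.1.2 * e p.2 ≤ 1 * 1 * 1 := by
          apply mul_le_mul (mul_le_mul ha1 hb1 hb0 zero_le_one) he1 he0 (by norm_num)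
      _ = 1 := by ring
  have hG := mvGen_isMVSub hGenBd
  have hdcont : Continuous fun p : (X × Y) × Z => d p.2 := d.continuous.comp continuous_snd
  let md : C(X × Y, ℝ) → C((X × Y) × Z, ℝ) := fun u =>
    ⟨fun p => u p.1 * d p.2, (u.continuous.comp continuous_fst).mul hdcont⟩
  let D' : C((X × Y) × Z, ℝ) := ⟨fun p => d p.2, hdcont⟩
  have h1A : (1 : C(X, ℝ)) ∈ A := by simpa using hA.2.2.2 0 hA.2.1
  have h1B : (1 : C(Y, ℝ)) ∈ B := by simpa using hB.2.2.2 0 hB.2.1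
  have hD'G : D' ∈ mvGen Gen :=
    subset_mvGen Gen ⟨1, h1A, 1, h1B, d, hd, fun p => by simp [D']⟩
  set T : Set C(X × Y, ℝ) := {u | (∀ q, u q ∈ Icc (0:ℝ) 1) ∧ md u ∈ mvGen Gen} with hTDef
  have hT : IsMVSub T := by
    refine ⟨fun u hu => hu.1, ⟨by simp, ?_⟩, ?_, ?_⟩
    · have : md 0 = 0 := by ext p; simp [md]
      rw [this]; exact hG.2.1
    · intro u hu v hv
      refine ⟨isMVSub_full.2.2.1 u hu.1 v hv.1, ?_⟩
      have key : md ((u + v) ⊓ 1) = ((md u + md v) ⊓ 1) ⊓ D' := by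
        ext p
        obtain ⟨hu0, hu1⟩ := hu.1 p.1
        obtain ⟨hv0, hv1⟩ := hv.1 p.1
        obtain ⟨hd0, hd1⟩ := hD.1 d hd p.2
        simp only [md, D', ContinuousMap.coe_mk, ContinuousMap.inf_apply,
          ContinuousMap.add_apply, ContinuousMap.one_apply]
        rcases le_total (u p.1 + v p.1) 1 with h | h
        · rw [inf_eq_left.mpr h,
            inf_eq_left.mpr (by nlinarith : u p.1 * d p.2 + v p.1 * d p.2 ≤ 1),
            inf_eq_left.mpr (by nlinarith : u p.1 * d p.2 + v p.1 * d p.2 ≤ d p.2)]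
          ring
        · rw [inf_eq_right.mpr h,
            inf_eq_right.mpr (show d p.2 ≤ (u p.1 * d p.2 + v p.1 * d p.2) ⊓ 1 from
              le_inf (by nlinarith) hd1)]
          ring
      rw [key]
      exact inf_mem_of_isMVSub hG (hG.2.2.1 _ hu.2 _ hv.2) hD'G
    · intro u hu
      refine ⟨isMVSub_full.2.2.2 u hu.1, ?_⟩
      have key : md (1 - u) = 1 - (((1 - D') + md u) ⊓ 1) := by
        ext p
        obtain ⟨hu0, hu1⟩ := hu.1 p.1
        obtain ⟨hd0, hd1⟩ := hD.1 d hd p.2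
        simp only [md, D', ContinuousMap.coe_mk, ContinuousMap.inf_apply,
          ContinuousMap.add_apply, ContinuousMap.one_apply, ContinuousMap.sub_apply]
        rw [inf_eq_left.mpr (by nlinarith : 1 - d p.2 + u p.1 * d p.2 ≤ 1)]
        ring
      rw [key]
      exact hG.2.2.2 _ (hG.2.2.1 _ (hG.2.2.2 _ hD'G) _ hu.2)
  have hST : {h : C(X × Y, ℝ) | ∃ a ∈ A, ∃ b ∈ B, ∀ p : X × Y, h p = a p.1 * b p.2} ⊆ T := by
    rintro h ⟨a, ha, b, hb, hh⟩
    constructor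
    · intro q
      obtain ⟨ha0, ha1⟩ := hA.1 a ha q.1
      obtain ⟨hb0, hb1⟩ := hB.1 b hb q.2
      rw [hh q]
      exact ⟨by positivity, by nlinarith⟩
    · refine subset_mvGen Gen ⟨a, ha, b, hb, d, hd, fun p => ?_⟩
      simp only [md, ContinuousMap.coe_mk]
      rw [hh p.1]
  have hfT : f ∈ T := mvGen_le hT hST hf
  have hgmd : g = md f := by
    ext p
    rw [hg p]
    rfl
  rw [hgmd]
  exact hfT.2
end

section
/- Every semisimple MV-algebra admits an injective MV-algebra homomorphism into a unital commutative semisimple PMV-algebra. -/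
universe u v w

/-- An MV-algebra structure on the type `A`. -/
structure MVAlg (A : Type u) where
  oplus : A → A → A
  star : A → A
  zero : A
  oplus_comm : ∀ x y, oplus x y = oplus y x
  oplus_assoc : ∀ x y z, oplus (oplus x y) z = oplus x (oplus y z)
  oplus_zero : ∀ x, oplus x zero = x
  star_star : ∀ x, star (star x) = x
  oplus_one : ∀ x, oplus x (star zero) = star zero
  luk : ∀ x y, oplus (star (oplus (star x) y)) y = oplus (star (oplus (star y) x)) x

namespace MVAlg

variable {A : Type u}

/-- The top element `1 := 0*`. -/
def one (M : MVAlg A) : A := M.star M.zero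

/-- The underlying order: `x ≤ y` iff `x* ⊕ y = 1`. -/
def le (M : MVAlg A) (x y : A) : Prop := M.oplus (M.star x) y = M.one

/-- An ideal: contains `0`, closed under `⊕` and downward closed. -/
def IsIdeal (M : MVAlg A) (I : Set A) : Prop :=
  M.zero ∈ I ∧ (∀ x ∈ I, ∀ y ∈ I, M.oplus x y ∈ I) ∧ (∀ x y, M.le x y → y ∈ I → x ∈ I)

/-- A maximal proper ideal. -/
def IsMaximalIdeal (M : MVAlg A) (I : Set A) : Prop :=
  M.IsIdeal I ∧ I ≠ Set.univ ∧ ∀ J, M.IsIdeal J → J ≠ Set.univ → I ⊆ J → J = I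

/-- Semisimplicity: the intersection of all maximal proper ideals is `{0}`. -/
def Semisimple (M : MVAlg A) : Prop :=
  {x | ∀ I, M.IsMaximalIdeal I → x ∈ I} = {M.zero}

end MVAlg

/-- Homomorphisms of MV-algebras preserve `⊕`, `*` and `0`. -/
def MVHom {A : Type u} {B : Type v} (M : MVAlg A) (N : MVAlg B) (f : A → B) : Prop :=
  (∀ x y, f (M.oplus x y) = N.oplus (f x) (f y)) ∧
  (∀ x, f (M.star x) = N.star (f x)) ∧ f M.zero = N.zero

/-- A unital commutative PMV-algebra. -/
structure PMVAlg (A : Type u) extends MVAlg A where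
  mul : A → A → A
  mul_assoc : ∀ x y z, mul (mul x y) z = mul x (mul y z)
  mul_comm : ∀ x y, mul x y = mul y x
  mul_one : ∀ x, mul x toMVAlg.one = x
  mul_linear_right : ∀ x y z, toMVAlg.le y (toMVAlg.star z) →
    mul x (toMVAlg.oplus y z) = toMVAlg.oplus (mul x y) (mul x z)
  mul_linear_left : ∀ x y z, toMVAlg.le x (toMVAlg.star y) →
    mul (toMVAlg.oplus x y) z = toMVAlg.oplus (mul x z) (mul y z)

/-- Semisimplicity of a PMV-algebra is semisimplicity of its MV-reduct. -/
def PMVAlg.Semisimple {A : Type u} (P : PMVAlg A) : Prop := P.toMVAlg.Semisimple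

/-- Homomorphisms of PMV-algebras. -/
def PMVHom {A : Type u} {B : Type v} (P : PMVAlg A) (Q : PMVAlg B) (f : A → B) : Prop :=
  MVHom P.toMVAlg Q.toMVAlg f ∧ ∀ x y, f (P.mul x y) = Q.mul (f x) (f y)

/-- A Riesz MV-algebra: an MV-algebra with a scalar multiplication by elements of `[0,1]`. -/
structure RieszMVAlg (A : Type u) extends MVAlg A where
  smul : ℝ → A → A
  smul_oplus : ∀ α : ℝ, α ∈ Set.Icc (0:ℝ) 1 → ∀ x y, toMVAlg.le x (toMVAlg.star y) →
    smul α (toMVAlg.oplus x y) = toMVAlg.oplus (smul α x) (smul α y)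
  add_smul : ∀ α β : ℝ, α ∈ Set.Icc (0:ℝ) 1 → β ∈ Set.Icc (0:ℝ) 1 → α + β ≤ 1 → ∀ x,
    smul (α + β) x = toMVAlg.oplus (smul α x) (smul β x) ∧
    toMVAlg.le (smul α x) (toMVAlg.star (smul β x))
  mul_smul : ∀ α β : ℝ, α ∈ Set.Icc (0:ℝ) 1 → β ∈ Set.Icc (0:ℝ) 1 → ∀ x,
    smul (α * β) x = smul α (smul β x)
  one_smul : ∀ x, smul 1 x = x

/-- Semisimplicity of a Riesz MV-algebra. -/
def RieszMVAlg.Semisimple {A : Type u} (R : RieszMVAlg A) : Prop := R.toMVAlg.Semisimple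

/-- Homomorphisms of Riesz MV-algebras. -/
def RieszMVHom {A : Type u} {B : Type v} (R : RieszMVAlg A) (S : RieszMVAlg B) (f : A → B) : Prop :=
  MVHom R.toMVAlg S.toMVAlg f ∧
  ∀ α : ℝ, α ∈ Set.Icc (0:ℝ) 1 → ∀ x, f (R.smul α x) = S.smul α (f x)

/-- A unital commutative fMV-algebra. -/
structure FMVAlg (A : Type u) extends PMVAlg A, RieszMVAlg A where
  smul_mul_left : ∀ α : ℝ, α ∈ Set.Icc (0:ℝ) 1 → ∀ x y,
    smul α (mul x y) = mul (smul α x) y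
  smul_mul_right : ∀ α : ℝ, α ∈ Set.Icc (0:ℝ) 1 → ∀ x y,
    smul α (mul x y) = mul x (smul α y)

/-- Semisimplicity of an fMV-algebra. -/
def FMVAlg.Semisimple {A : Type u} (F : FMVAlg A) : Prop := F.toMVAlg.Semisimple

/-- Homomorphisms of fMV-algebras preserve `⊕`, `*`, `0`, `·` and scalar multiplication. -/
def FMVHom {A : Type u} {B : Type v} (F : FMVAlg A) (G : FMVAlg B) (f : A → B) : Prop :=
  MVHom F.toMVAlg G.toMVAlg f ∧
  (∀ x y, f (F.mul x y) = G.mul (f x) (f y)) ∧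
  (∀ α : ℝ, α ∈ Set.Icc (0:ℝ) 1 → ∀ x, f (F.smul α x) = G.smul α (f x))

/-!
A semisimple MV-algebra `M` embeds into the product of its quotients `M / I` over the maximal
ideals `I`, so it suffices to embed each `M / I` into the standard MV-algebra `[0,1]`: the power
`[0,1] ^ {maximal ideals}` with the pointwise real product is a semisimple PMV-algebra, because its
coordinate projections separate points. The quotient `M / I` is simple, hence a chain by
prelinearity. Its Chang group, pairs `n + x` added with carry, is a linearly ordered abelian
group with strong unit `u = 1 + 0`, and simplicity makes it archimedean. Hölder's theorem
(`Archimedean.embedReal`) embeds it into `ℝ` with `u ↦ 1`, and on the interval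
`[0, u] ≅ M / I` this is an injective MV-homomorphism into `[0,1]`.
-/

namespace MVAlg

variable {A : Type u} (M : MVAlg A)

local notation:65 x:65 " ∔ " y:66 => MVAlg.oplus M x y
local notation:max x:max "⋆" => MVAlg.star M x
local notation:50 x:51 " ≼ " y:51 => MVAlg.le M x y

def sub (x y : A) : A := (x⋆ ∔ y)⋆

def odot (x y : A) : A := (x⋆ ∔ y⋆)⋆

local notation:65 x:65 " ⊖ " y:66 => MVAlg.sub M x y
local notation:70 x:70 " ⊙ " y:71 => MVAlg.odot M x y

/-- The lattice meet `x ∧ y`. -/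
def wedge (x y : A) : A := x ⊖ (x ⊖ y)

def nsmul : ℕ → A → A
  | 0, _ => M.zero
  | n + 1, x => x ∔ nsmul n x

instance : Std.Associative M.oplus := ⟨M.oplus_assoc⟩

instance : Std.Commutative M.oplus := ⟨M.oplus_comm⟩


section Basic

lemma zero_oplus (x : A) : M.zero ∔ x = x := by rw [M.oplus_comm, M.oplus_zero]

lemma oplus_one_right (x : A) : x ∔ M.one = M.one := M.oplus_one x

lemma one_oplus (x : A) : M.one ∔ x = M.one := by rw [M.oplus_comm, M.oplus_one_right]

lemma star_zero : M.zero⋆ = M.one := rfl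

lemma star_one : M.one⋆ = M.zero := M.star_star _

lemma star_injective : Function.Injective M.star := fun x y h => by
  rw [← M.star_star x, h, M.star_star]

lemma star_oplus_self (x : A) : x⋆ ∔ x = M.one := by
  simpa [star_one, zero_oplus, oplus_one_right] using M.luk M.one x

lemma oplus_star_self (x : A) : x ∔ x⋆ = M.one := by rw [M.oplus_comm, star_oplus_self]

lemma oplus_eq_one_iff {x y : A} : x ∔ y = M.one ↔ x⋆ ≼ y := by
  rw [MVAlg.le, M.star_star]

lemma le_refl (x : A) : x ≼ x := M.star_oplus_self x

lemma le_one (x : A) : x ≼ M.one := M.oplus_one_right _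

lemma zero_le (x : A) : M.zero ≼ x := M.one_oplus x

lemma le_antisymm {x y : A} (hxy : x ≼ y) (hyx : y ≼ x) : x = y := by
  have h := M.luk x y
  rw [show x⋆ ∔ y = M.one from hxy, show y⋆ ∔ x = M.one from hyx, star_one, zero_oplus,
    zero_oplus] at h
  exact h.symm

lemma sub_oplus_of_le {x y : A} (h : y ≼ x) : (x ⊖ y) ∔ y = x := by
  have hl := M.luk x y
  rwa [show y⋆ ∔ x = M.one from h, star_one, zero_oplus] at hl

lemma le_oplus_right (x y : A) : x ≼ x ∔ y := by
  rw [MVAlg.le, ← M.oplus_assoc, star_oplus_self, one_oplus]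

lemma le_oplus_left (x y : A) : x ≼ y ∔ x := M.oplus_comm x y ▸ M.le_oplus_right x y

lemma le_iff_exists_oplus {x y : A} : x ≼ y ↔ ∃ c, y = x ∔ c :=
  ⟨fun h => ⟨y ⊖ x, by rw [M.oplus_comm, M.sub_oplus_of_le h]⟩,
    fun ⟨c, hc⟩ => hc ▸ M.le_oplus_right x c⟩

lemma le_trans {x y z : A} (hxy : x ≼ y) (hyz : y ≼ z) : x ≼ z := by
  obtain ⟨c, rfl⟩ := M.le_iff_exists_oplus.1 hxy
  obtain ⟨d, rfl⟩ := M.le_iff_exists_oplus.1 hyz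
  rw [M.oplus_assoc]
  exact M.le_oplus_right x _

lemma oplus_le_oplus_right {x y : A} (c : A) (h : x ≼ y) : x ∔ c ≼ y ∔ c := by
  obtain ⟨d, rfl⟩ := M.le_iff_exists_oplus.1 h
  rw [show x ∔ d ∔ c = x ∔ c ∔ d by ac_rfl]
  exact M.le_oplus_right _ _

lemma oplus_le_oplus_left {x y : A} (c : A) (h : x ≼ y) : c ∔ x ≼ c ∔ y := by
  rw [M.oplus_comm c, M.oplus_comm c]
  exact M.oplus_le_oplus_right c h

lemma oplus_le_oplus {x y z w : A} (hxy : x ≼ y) (hzw : z ≼ w) : x ∔ z ≼ y ∔ w :=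
  M.le_trans (M.oplus_le_oplus_right z hxy) (M.oplus_le_oplus_left y hzw)

lemma star_le_star {x y : A} (h : x ≼ y) : y⋆ ≼ x⋆ := by
  rwa [MVAlg.le, M.star_star, M.oplus_comm]

lemma star_le_star_iff {x y : A} : y⋆ ≼ x⋆ ↔ x ≼ y :=
  ⟨fun h => by simpa only [star_star] using M.star_le_star h, M.star_le_star⟩

lemma le_star_comm {x y : A} : x ≼ y⋆ ↔ y ≼ x⋆ := by
  rw [← M.star_le_star_iff, M.star_star]

lemma star_le_comm {x y : A} : x⋆ ≼ y ↔ y⋆ ≼ x := by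
  rw [← M.star_le_star_iff, M.star_star]

lemma le_zero_iff {x : A} : x ≼ M.zero ↔ x = M.zero :=
  ⟨fun h => M.le_antisymm h (M.zero_le x), fun h => h ▸ M.le_refl _⟩

lemma one_le_iff {x : A} : M.one ≼ x ↔ x = M.one :=
  ⟨fun h => M.le_antisymm (M.le_one x) h, fun h => h ▸ M.le_refl _⟩

lemma sub_le_iff {x y z : A} : x ⊖ y ≼ z ↔ x ≼ y ∔ z := by
  rw [MVAlg.le, MVAlg.le, MVAlg.sub, M.star_star, M.oplus_assoc]

lemma le_iff_sub_eq_zero {x y : A} : x ≼ y ↔ x ⊖ y = M.zero := by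
  rw [MVAlg.le, MVAlg.sub, ← M.star_one]
  exact M.star_injective.eq_iff.symm

lemma sub_self (x : A) : x ⊖ x = M.zero := M.le_iff_sub_eq_zero.1 (M.le_refl x)

lemma sub_zero (x : A) : x ⊖ M.zero = x := by rw [MVAlg.sub, M.oplus_zero, M.star_star]

lemma zero_sub (x : A) : M.zero ⊖ x = M.zero := M.le_iff_sub_eq_zero.1 (M.zero_le x)

lemma sub_le_self (x y : A) : x ⊖ y ≼ x := M.sub_le_iff.2 (M.le_oplus_left x y)

lemma le_sub_oplus (x y : A) : x ≼ (x ⊖ y) ∔ y := by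
  rw [M.oplus_comm, ← M.sub_le_iff]
  exact M.le_refl _

lemma sub_le_sub_left {x y : A} (c : A) (h : x ≼ y) : c ⊖ y ≼ c ⊖ x :=
  M.star_le_star (M.oplus_le_oplus_left _ h)

lemma star_sub (x y : A) : (x ⊖ y)⋆ = x⋆ ∔ y := M.star_star _

lemma odot_eq_sub (x y : A) : x ⊙ y = x ⊖ y⋆ := rfl

lemma star_odot (x y : A) : (x ⊙ y)⋆ = x⋆ ∔ y⋆ := M.star_star _

lemma odot_comm (x y : A) : x ⊙ y = y ⊙ x := by rw [MVAlg.odot, MVAlg.odot, M.oplus_comm]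

lemma odot_assoc (x y z : A) : x ⊙ y ⊙ z = x ⊙ (y ⊙ z) := by
  simp only [MVAlg.odot, star_star, oplus_assoc]

lemma odot_le_left (x y : A) : x ⊙ y ≼ x := M.sub_le_self x _

lemma odot_le_odot_left {x y : A} (c : A) (h : x ≼ y) : c ⊙ x ≼ c ⊙ y :=
  M.sub_le_sub_left c (M.star_le_star h)

lemma odot_eq_one {x y : A} (h : x ⊙ y = M.one) : x = M.one :=
  (M.one_le_iff).1 (h ▸ M.odot_le_left x y)

lemma odot_star_self (x : A) : x ⊙ x⋆ = M.zero := by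
  rw [MVAlg.odot, M.star_star, M.star_oplus_self, M.star_one]

lemma odot_oplus_star_of_le {x y : A} (h : y⋆ ≼ x) : x ⊙ y ∔ y⋆ = x :=
  M.sub_oplus_of_le h

lemma star_oplus_eq_odot (x y : A) : (x ∔ y)⋆ = x⋆ ⊙ y⋆ := by
  simp only [MVAlg.odot, star_star]

lemma nsmul_add (m n : ℕ) (x : A) : M.nsmul (m + n) x = M.nsmul m x ∔ M.nsmul n x := by
  induction m with
  | zero => rw [Nat.zero_add, MVAlg.nsmul, zero_oplus]
  | succ m ih => rw [Nat.succ_add, MVAlg.nsmul, MVAlg.nsmul, ih, M.oplus_assoc]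

end Basic

section Meet

lemma wedge_comm (x y : A) : M.wedge x y = M.wedge y x := by
  have h := M.luk y⋆ x⋆
  simp only [star_star] at h
  simp only [MVAlg.wedge, MVAlg.sub]
  rw [M.oplus_comm x⋆, M.oplus_comm x⋆ y, M.oplus_comm y⋆, M.oplus_comm y⋆ x, h]

lemma wedge_eq_right {x y : A} (h : y ≼ x) : M.wedge x y = y := by
  rw [wedge_comm, MVAlg.wedge, M.le_iff_sub_eq_zero.1 h, sub_zero]

lemma wedge_oplus_sub (x y : A) : M.wedge x y ∔ (x ⊖ y) = x :=
  M.sub_oplus_of_le (M.sub_le_self x y)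

lemma wedge_oplus_star (x y : A) : M.wedge x y ∔ y⋆ = x ∔ y⋆ := by
  have h : y⋆ ≼ (y ⊖ x)⋆ := by rw [star_sub]; exact M.le_oplus_right _ _
  rw [wedge_comm, MVAlg.wedge, ← M.star_star (y ⊖ x), ← odot_eq_sub, M.odot_comm,
    M.odot_oplus_star_of_le h, star_sub, M.oplus_comm]

lemma sub_sub_sub_self (x y : A) : (x ⊖ y) ⊖ (y ⊖ x) = x ⊖ y := by
  suffices h : x⋆ ∔ y ∔ (y ⊖ x) = x⋆ ∔ y by
    show ((x ⊖ y)⋆ ∔ (y ⊖ x))⋆ = x ⊖ y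
    rw [star_sub, h]; rfl
  calc x⋆ ∔ y ∔ (y ⊖ x) = M.wedge y x ∔ x⋆ ∔ (y ⊖ x) := by
        rw [wedge_oplus_star, M.oplus_comm y]
    _ = M.wedge y x ∔ (y ⊖ x) ∔ x⋆ := by ac_rfl
    _ = x⋆ ∔ y := by rw [wedge_oplus_sub, M.oplus_comm]

def Disjoint (a b : A) : Prop := ∀ w, w ≼ a → w ≼ b → w = M.zero

lemma disjoint_sub_sub (x y : A) : M.Disjoint (x ⊖ y) (y ⊖ x) := by
  -- with `a = x ⊖ y`: `a ⊖ w ≥ a ⊖ (y ⊖ x) = a`,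
  -- so `w = a ∧ w = a ⊖ (a ⊖ w) ≤ a ⊖ a = 0`
  intro w hwa hwb
  have hsub : x ⊖ y ≼ (x ⊖ y) ⊖ w := by
    simpa only [sub_sub_sub_self] using M.sub_le_sub_left (x ⊖ y) hwb
  rw [← M.wedge_eq_right hwa, ← M.le_zero_iff, ← M.sub_self (x ⊖ y)]
  exact M.sub_le_sub_left _ hsub

variable {M}

lemma Disjoint.oplus_right {a b c : A} (hb : M.Disjoint a b) (hc : M.Disjoint a c) :
    M.Disjoint a (b ∔ c) := by
  intro w hwa hwbc
  have hwb : w ⊖ c ≼ b := M.sub_le_iff.2 (M.oplus_comm b c ▸ hwbc)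
  have hwc : w ≼ c := M.le_iff_sub_eq_zero.2
    (hb _ (M.le_trans (M.sub_le_self w c) hwa) hwb)
  exact hc w hwa hwc

lemma Disjoint.nsmul_right {a b : A} (h : M.Disjoint a b) (n : ℕ) :
    M.Disjoint a (M.nsmul n b) := by
  induction n with
  | zero => exact fun w _ hw => M.le_zero_iff.1 hw
  | succ n ih => exact h.oplus_right ih

end Meet

section Regrouping

lemma oplus_sub_cancel {x y : A} (h : x ≼ y⋆) : (x ∔ y) ⊖ y = x := by
  conv_rhs => rw [← M.wedge_eq_right h]
  simp only [MVAlg.wedge, MVAlg.sub, M.star_star]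
  rw [M.oplus_comm y x, M.oplus_comm y]

lemma odot_oplus_eq_oplus_odot {x y z : A} (hxy : y⋆ ≼ x) (hyz : z⋆ ≼ y) :
    x ⊙ y ∔ z = x ∔ y ⊙ z := by
  calc x ⊙ y ∔ z = x ⊙ y ∔ (z ⊙ y ∔ y⋆) := by
        rw [M.odot_oplus_star_of_le (M.star_le_comm.1 hyz)]
    _ = x ⊙ y ∔ y⋆ ∔ y ⊙ z := by rw [M.odot_comm z]; ac_rfl
    _ = x ∔ y ⊙ z := by rw [M.odot_oplus_star_of_le hxy]

lemma odot_oplus_eq_odot_oplus {x y z : A} (hxy : y⋆ ≼ x) (hyz : y ≼ z⋆) :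
    x ⊙ y ∔ z = x ⊙ (y ∔ z) := by
  have hy : y ⊙ x ∔ x⋆ = y := M.odot_oplus_star_of_le (M.star_le_comm.1 hxy)
  have hle : x ⊙ y ∔ z ≼ x⋆⋆ := by
    rw [M.star_star]
    calc x ⊙ y ∔ z ≼ x ⊙ y ∔ y⋆ := M.oplus_le_oplus_left _ (M.le_star_comm.1 hyz)
      _ = x := M.odot_oplus_star_of_le hxy
  calc x ⊙ y ∔ z = (x ⊙ y ∔ z ∔ x⋆) ⊖ x⋆ := (M.oplus_sub_cancel hle).symm
    _ = (y ∔ z) ⊖ x⋆ := by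
        rw [show x ⊙ y ∔ z ∔ x⋆ = y ⊙ x ∔ x⋆ ∔ z by rw [M.odot_comm]; ac_rfl, hy]
    _ = x ⊙ (y ∔ z) := by rw [M.odot_comm x, M.odot_eq_sub]

lemma oplus_odot_eq_odot_oplus {x y z : A} (hxy : x ≼ y⋆) (hyz : y ≼ z⋆) :
    (x ∔ y) ⊙ z = x ⊙ (y ∔ z) := by
  refine M.star_injective ?_
  rw [M.star_odot, M.star_odot, M.star_oplus_eq_odot, M.star_oplus_eq_odot]
  exact M.odot_oplus_eq_oplus_odot (by rwa [M.star_star, ← M.le_star_comm])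
    (by rwa [M.star_star, ← M.le_star_comm])

end Regrouping

section Simple

def IsChain : Prop := ∀ x y : A, x ≼ y ∨ y ≼ x

/-- The usual archimedean characterisation of simplicity (`M` has exactly two ideals). -/
structure IsSimple : Prop where
  zero_ne_one : M.zero ≠ M.one
  exists_nsmul_eq_one : ∀ x, x ≠ M.zero → ∃ n, M.nsmul n x = M.one

variable {M}

theorem IsSimple.isChain (hM : M.IsSimple) : M.IsChain := by
  intro x y
  by_cases hxy : x ⊖ y = M.zero
  · exact Or.inl (M.le_iff_sub_eq_zero.2 hxy)
  · obtain ⟨n, hn⟩ := hM.exists_nsmul_eq_one _ hxy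
    -- `y ⊖ x` is disjoint from `x ⊖ y`, hence from `n (x ⊖ y) = 1`
    have h := (M.disjoint_sub_sub y x).nsmul_right n
    rw [hn] at h
    exact Or.inr (M.le_iff_sub_eq_zero.2 (h _ (M.le_refl _) (M.le_one _)))

lemma IsChain.le_star_of_oplus_ne_one (hc : M.IsChain) {x y : A} (h : x ∔ y ≠ M.one) :
    x ≼ y⋆ :=
  (hc x y⋆).resolve_right fun h' => h (M.oplus_eq_one_iff.2 (M.star_le_comm.2 h'))

end Simple

section Hom

variable {M} {B : Type v} {N : MVAlg B} {f : A → B}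

lemma _root_.MVHom.map_one (hf : MVHom M N f) : f M.one = N.one := by
  rw [MVAlg.one, hf.2.1, hf.2.2, MVAlg.one]

lemma _root_.MVHom.map_sub (hf : MVHom M N f) (x y : A) :
    f (M.sub x y) = N.sub (f x) (f y) := by
  simp only [MVAlg.sub, hf.1, hf.2.1]

lemma _root_.MVHom.map_le (hf : MVHom M N f) {x y : A} (h : M.le x y) : N.le (f x) (f y) := by
  rw [MVAlg.le, ← hf.2.1, ← hf.1, h, hf.map_one]

lemma _root_.MVHom.map_nsmul (hf : MVHom M N f) (n : ℕ) (x : A) :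
    f (M.nsmul n x) = N.nsmul n (f x) := by
  induction n with
  | zero => exact hf.2.2
  | succ n ih => rw [MVAlg.nsmul, hf.1, ih, MVAlg.nsmul]

lemma _root_.MVHom.comp {C : Type w} {K : MVAlg C} {g : B → C} (hg : MVHom N K g)
    (hf : MVHom M N f) : MVHom M K (g ∘ f) :=
  ⟨fun x y => by simp only [Function.comp, hf.1, hg.1],
    fun x => by simp only [Function.comp, hf.2.1, hg.2.1],
    by simp only [Function.comp, hf.2.2, hg.2.2]⟩

end Hom

section Quotient

lemma sub_le_sub_oplus_sub (x y z : A) : x ⊖ z ≼ (x ⊖ y) ∔ (y ⊖ z) := by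
  refine M.sub_le_iff.2 (M.le_trans (M.le_sub_oplus x y) ?_)
  rw [show z ∔ ((x ⊖ y) ∔ (y ⊖ z)) = (x ⊖ y) ∔ ((y ⊖ z) ∔ z) by ac_rfl]
  exact M.oplus_le_oplus_left _ (M.le_sub_oplus y z)

lemma oplus_sub_oplus_le (x y x' y' : A) :
    (x ∔ y) ⊖ (x' ∔ y') ≼ (x ⊖ x') ∔ (y ⊖ y') := by
  refine M.sub_le_iff.2 (M.le_trans (M.oplus_le_oplus (M.le_sub_oplus x x')
    (M.le_sub_oplus y y')) ?_)
  rw [show (x ⊖ x') ∔ x' ∔ ((y ⊖ y') ∔ y') = x' ∔ y' ∔ ((x ⊖ x') ∔ (y ⊖ y')) by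
    ac_rfl]
  exact M.le_refl _

lemma star_sub_star (x y : A) : x⋆ ⊖ y⋆ = y ⊖ x := by
  rw [MVAlg.sub, MVAlg.sub, M.star_star, M.oplus_comm]

variable {I : Set A} (hI : M.IsIdeal I)

def idealSetoid : Setoid A where
  r x y := x ⊖ y ∈ I ∧ y ⊖ x ∈ I
  iseqv :=
    { refl := fun x => ⟨M.sub_self x ▸ hI.1, M.sub_self x ▸ hI.1⟩
      symm := fun h => ⟨h.2, h.1⟩
      trans := fun {x y z} hxy hyz =>
        ⟨hI.2.2 _ _ (M.sub_le_sub_oplus_sub x y z) (hI.2.1 _ hxy.1 _ hyz.1),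
          hI.2.2 _ _ (M.sub_le_sub_oplus_sub z y x) (hI.2.1 _ hyz.2 _ hxy.2)⟩ }

def quotient : MVAlg (Quotient (M.idealSetoid hI)) where
  oplus := Quotient.map₂ M.oplus fun _ _ hx _ _ hy =>
    ⟨hI.2.2 _ _ (M.oplus_sub_oplus_le _ _ _ _) (hI.2.1 _ hx.1 _ hy.1),
      hI.2.2 _ _ (M.oplus_sub_oplus_le _ _ _ _) (hI.2.1 _ hx.2 _ hy.2)⟩
  star := Quotient.map M.star fun x y h =>
    ⟨M.star_sub_star x y ▸ h.2, M.star_sub_star y x ▸ h.1⟩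
  zero := Quotient.mk _ M.zero
  oplus_comm := by
    rintro ⟨x⟩ ⟨y⟩; exact congrArg (Quotient.mk _) (M.oplus_comm x y)
  oplus_assoc := by
    rintro ⟨x⟩ ⟨y⟩ ⟨z⟩; exact congrArg (Quotient.mk _) (M.oplus_assoc x y z)
  oplus_zero := by
    rintro ⟨x⟩; exact congrArg (Quotient.mk _) (M.oplus_zero x)
  star_star := by
    rintro ⟨x⟩; exact congrArg (Quotient.mk _) (M.star_star x)
  oplus_one := by
    rintro ⟨x⟩; exact congrArg (Quotient.mk _) (M.oplus_one x)
  luk := by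
    rintro ⟨x⟩ ⟨y⟩; exact congrArg (Quotient.mk _) (M.luk x y)

lemma mvHom_quotient_mk : MVHom M (M.quotient hI) (Quotient.mk _) :=
  ⟨fun _ _ => rfl, fun _ => rfl, rfl⟩

lemma quotient_mk_eq_zero_iff {x : A} :
    Quotient.mk (M.idealSetoid hI) x = (M.quotient hI).zero ↔ x ∈ I := by
  refine Quotient.eq.trans ?_
  show x ⊖ M.zero ∈ I ∧ M.zero ⊖ x ∈ I ↔ x ∈ I
  rw [M.sub_zero, M.zero_sub]
  exact ⟨And.left, fun h => ⟨h, hI.1⟩⟩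

lemma quotient_le_iff {x y : A} :
    (M.quotient hI).le (Quotient.mk _ x) (Quotient.mk _ y) ↔ x ⊖ y ∈ I := by
  rw [(M.quotient hI).le_iff_sub_eq_zero, ← (M.mvHom_quotient_mk hI).map_sub,
    M.quotient_mk_eq_zero_iff hI]

variable {M}

lemma IsMaximalIdeal.exists_oplus_nsmul_eq_one (hmax : M.IsMaximalIdeal I) {x : A}
    (hx : x ∉ I) : ∃ i ∈ I, ∃ n, i ∔ M.nsmul n x = M.one := by
  set J : Set A := {w | ∃ i ∈ I, ∃ n, w ≼ i ∔ M.nsmul n x}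
  have hJ : M.IsIdeal J := by
    refine ⟨⟨M.zero, hmax.1.1, 0, M.zero_le _⟩, ?_, ?_⟩
    · rintro w ⟨i, hi, n, hw⟩ w' ⟨i', hi', n', hw'⟩
      refine ⟨i ∔ i', hmax.1.2.1 _ hi _ hi', n + n', ?_⟩
      rw [M.nsmul_add, show i ∔ i' ∔ (M.nsmul n x ∔ M.nsmul n' x)
        = i ∔ M.nsmul n x ∔ (i' ∔ M.nsmul n' x) by ac_rfl]
      exact M.oplus_le_oplus hw hw'
    · rintro w w' hw ⟨i, hi, n, hw'⟩
      exact ⟨i, hi, n, M.le_trans hw hw'⟩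
  have hIJ : I ⊆ J := fun i hi => ⟨i, hi, 0, M.le_oplus_right i _⟩
  have hxJ : x ∈ J := ⟨M.zero, hmax.1.1, 1, by
    rw [M.zero_oplus, MVAlg.nsmul, MVAlg.nsmul, M.oplus_zero]; exact M.le_refl x⟩
  have hJ_top : J = Set.univ := by
    by_contra hne
    exact hx (hmax.2.2 J hJ hne hIJ ▸ hxJ)
  obtain ⟨i, hi, n, h⟩ : M.one ∈ J := hJ_top ▸ Set.mem_univ _
  exact ⟨i, hi, n, M.one_le_iff.1 h⟩

theorem isSimple_quotient (hmax : M.IsMaximalIdeal I) : (M.quotient hmax.1).IsSimple where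
  zero_ne_one h := by
    have hone : M.one ∈ I := (M.quotient_mk_eq_zero_iff hmax.1).1 h.symm
    exact hmax.2.1 (Set.eq_univ_of_forall fun w => hmax.1.2.2 _ _ (M.le_one w) hone)
  exists_nsmul_eq_one := by
    refine Quotient.ind fun x hx => ?_
    obtain ⟨i, hi, n, h⟩ := hmax.exists_oplus_nsmul_eq_one
      (fun hxI => hx ((M.quotient_mk_eq_zero_iff hmax.1).2 hxI))
    refine ⟨n, (M.quotient hmax.1).one_le_iff.1 ?_⟩
    rw [← (M.mvHom_quotient_mk hmax.1).map_nsmul, ← (M.mvHom_quotient_mk hmax.1).map_one,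
      M.quotient_le_iff]
    refine hmax.1.2.2 _ _ (M.sub_le_iff.2 ?_) hi
    rw [M.oplus_comm, h]
    exact M.le_refl _

end Quotient

/-- Chang's group of an MV-chain: `⟨n, x, _⟩` stands for `n + x`, a representation made
unique by excluding `x = 1`. -/
@[ext]
structure ChangGroup (_hc : M.IsChain) (_hnt : M.zero ≠ M.one) where
  int : ℤ
  frac : A
  frac_ne_one : frac ≠ M.one

namespace ChangGroup

open scoped Classical

variable {M} {hc : M.IsChain} {hnt : M.zero ≠ M.one}

local notation "G" => ChangGroup M hc hnt

instance : Zero G := ⟨⟨0, M.zero, hnt⟩⟩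

instance : One G := ⟨⟨1, M.zero, hnt⟩⟩

/-- Addition with carry: `x + y = (x ⊕ y) + (x ⊙ y)`, and in a chain `x ⊙ y = 0` unless
`x ⊕ y = 1`. -/
protected noncomputable def add (a b : G) : G :=
  if h : a.frac ∔ b.frac = M.one then
    ⟨a.int + b.int + 1, a.frac ⊙ b.frac, fun h' => a.frac_ne_one (M.odot_eq_one h')⟩
  else ⟨a.int + b.int, a.frac ∔ b.frac, h⟩

protected noncomputable def neg (a : G) : G :=
  if h : a.frac = M.zero then ⟨-a.int, M.zero, hnt⟩
  else ⟨-a.int - 1, a.frac⋆, fun h' => h (M.star_injective (h'.trans M.star_zero.symm))⟩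

noncomputable instance : Add G := ⟨ChangGroup.add⟩

noncomputable instance : Neg G := ⟨ChangGroup.neg⟩

@[simp] lemma int_zero : (0 : G).int = 0 := rfl

@[simp] lemma frac_zero : (0 : G).frac = M.zero := rfl

@[simp] lemma int_one : (1 : G).int = 1 := rfl

@[simp] lemma frac_one : (1 : G).frac = M.zero := rfl

@[simp] lemma int_add (a b : G) :
    (a + b).int = a.int + b.int + if a.frac ∔ b.frac = M.one then 1 else 0 := by
  change (ChangGroup.add a b).int = _
  unfold ChangGroup.add
  split_ifs <;> simp

@[simp] lemma frac_add (a b : G) :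
    (a + b).frac = if a.frac ∔ b.frac = M.one then a.frac ⊙ b.frac else a.frac ∔ b.frac := by
  change (ChangGroup.add a b).frac = _
  unfold ChangGroup.add
  split_ifs <;> rfl

lemma add_assoc_of_carry (a b c : G) (hab : a.frac ∔ b.frac = M.one) :
    a + b + c = a + (b + c) := by
  obtain ⟨m, x, hx⟩ := a
  obtain ⟨n, y, hy⟩ := b
  obtain ⟨k, z, hz⟩ := c
  dsimp only at hab
  have hyx : y⋆ ≼ x := M.star_le_comm.1 (M.oplus_eq_one_iff.1 hab)
  by_cases hbc : y ∔ z = M.one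
  · have e := M.odot_oplus_eq_oplus_odot hyx (M.star_le_comm.1 (M.oplus_eq_one_iff.1 hbc))
    by_cases h : x ⊙ y ∔ z = M.one
    · ext <;> simp [hab, hbc, h, ← e, M.odot_assoc]; omega
    · ext <;> simp [hab, hbc, h, ← e]; omega
  · have e := M.odot_oplus_eq_odot_oplus hyx (hc.le_star_of_oplus_ne_one hbc)
    have h : x ⊙ (y ∔ z) ≠ M.one := fun h => hbc (M.odot_eq_one (M.odot_comm x _ ▸ h))
    have h' : x ∔ (y ∔ z) = M.one := by rw [← M.oplus_assoc, hab, M.one_oplus]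
    ext <;> simp [hab, hbc, h, h', e]; omega

lemma add_assoc_of_not_carry (a b c : G) (hab : a.frac ∔ b.frac ≠ M.one)
    (hbc : b.frac ∔ c.frac ≠ M.one) : a + b + c = a + (b + c) := by
  obtain ⟨m, x, hx⟩ := a
  obtain ⟨n, y, hy⟩ := b
  obtain ⟨k, z, hz⟩ := c
  dsimp only at hab hbc
  have e := M.oplus_odot_eq_odot_oplus (hc.le_star_of_oplus_ne_one hab)
    (hc.le_star_of_oplus_ne_one hbc)
  by_cases h : x ∔ y ∔ z = M.one
  · ext <;> simp [hab, hbc, h, ← M.oplus_assoc, e]; omega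
  · ext <;> simp [hab, hbc, h, ← M.oplus_assoc]; omega

protected lemma add_comm (a b : G) : a + b = b + a := by
  ext <;> simp [M.oplus_comm a.frac, M.odot_comm a.frac]; omega

protected lemma add_assoc (a b c : G) : a + b + c = a + (b + c) := by
  by_cases hab : a.frac ∔ b.frac = M.one
  · exact add_assoc_of_carry a b c hab
  by_cases hbc : b.frac ∔ c.frac = M.one
  -- the mirror image, under commutativity, of the carry case for `c, b, a`
  · rw [ChangGroup.add_comm a b, ChangGroup.add_comm (b + a),
      ← add_assoc_of_carry c b a (by rwa [M.oplus_comm]), ChangGroup.add_comm (c + b),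
      ChangGroup.add_comm c]
  · exact add_assoc_of_not_carry a b c hab hbc

protected lemma zero_add (a : G) : 0 + a = a := by
  ext <;> simp [M.zero_oplus, a.frac_ne_one]

lemma neg_of_frac_eq_zero {a : G} (h : a.frac = M.zero) : -a = ⟨-a.int, M.zero, hnt⟩ :=
  dif_pos h

lemma neg_of_frac_ne_zero {a : G} (h : a.frac ≠ M.zero) :
    -a = ⟨-a.int - 1, a.frac⋆, fun h' => h (M.star_injective (h'.trans M.star_zero.symm))⟩ :=
  dif_neg h

protected lemma neg_add_cancel (a : G) : -a + a = 0 := by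
  by_cases h : a.frac = M.zero
  · rw [neg_of_frac_eq_zero h]
    ext <;> simp [h, M.zero_oplus, hnt]
  · rw [neg_of_frac_ne_zero h]
    ext <;> simp [M.star_oplus_self, M.odot_comm _ a.frac, M.odot_star_self]
    omega

noncomputable instance : AddCommGroup G where
  add_assoc := ChangGroup.add_assoc
  zero_add := ChangGroup.zero_add
  add_zero a := ChangGroup.add_comm a 0 ▸ ChangGroup.zero_add a
  add_comm := ChangGroup.add_comm
  neg_add_cancel := ChangGroup.neg_add_cancel
  nsmul := nsmulRec
  zsmul := zsmulRec

noncomputable instance : LinearOrder G where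
  le a b := a.int < b.int ∨ a.int = b.int ∧ a.frac ≼ b.frac
  le_refl a := Or.inr ⟨rfl, M.le_refl _⟩
  le_trans a b c := by
    rintro (h₁ | ⟨e₁, h₁⟩) (h₂ | ⟨e₂, h₂⟩)
    · exact Or.inl (h₁.trans h₂)
    · exact Or.inl (e₂ ▸ h₁)
    · exact Or.inl (e₁ ▸ h₂)
    · exact Or.inr ⟨e₁.trans e₂, M.le_trans h₁ h₂⟩
  le_antisymm a b := by
    rintro (h₁ | ⟨e₁, h₁⟩) (h₂ | ⟨e₂, h₂⟩)
    · omega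
    · omega
    · omega
    · exact ChangGroup.ext e₁ (M.le_antisymm h₁ h₂)
  le_total a b := by
    rcases lt_trichotomy a.int b.int with h | h | h
    · exact Or.inl (Or.inl h)
    · exact (hc a.frac b.frac).imp (fun h' => Or.inr ⟨h, h'⟩) fun h' => Or.inr ⟨h.symm, h'⟩
    · exact Or.inr (Or.inl h)
  toDecidableLE := Classical.decRel _

lemma le_def {a b : G} : a ≤ b ↔ a.int < b.int ∨ a.int = b.int ∧ a.frac ≼ b.frac :=
  Iff.rfl

lemma add_le_add_left' {b c : G} (h : b ≤ c) (a : G) : a + b ≤ a + c := by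
  obtain ⟨m, x, hx⟩ := a
  obtain ⟨n, y, hy⟩ := b
  obtain ⟨k, z, hz⟩ := c
  rw [le_def] at h ⊢
  dsimp only at h
  rcases h with hnk | ⟨rfl, hyz⟩
  · by_cases hxy : x ∔ y = M.one
    · by_cases hxz : x ∔ z = M.one
      · left; simp [hxy, hxz]; omega
      · rcases (show n + 1 < k ∨ n + 1 = k by omega) with hnk | rfl
        · left; simp [hxy, hxz]; omega
        · right
          simp only [int_add, frac_add, hxy, hxz, if_true, if_false]
          exact ⟨by omega, M.le_trans (M.odot_le_left x y) (M.le_oplus_right x z)⟩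
    · left; simp [hxy]; split_ifs <;> omega
  · by_cases hxy : x ∔ y = M.one
    · have hxz : x ∔ z = M.one := M.one_le_iff.1 (hxy ▸ M.oplus_le_oplus_left x hyz)
      right
      refine ⟨by simp [hxy, hxz], ?_⟩
      simp only [frac_add, hxy, hxz, if_true]
      exact M.odot_le_odot_left x hyz
    · by_cases hxz : x ∔ z = M.one
      · left; simp [hxy, hxz]
      · right
        refine ⟨by simp [hxy, hxz], ?_⟩
        simp only [frac_add, hxy, hxz, if_false]
        exact M.oplus_le_oplus_left x hyz

instance : IsOrderedAddMonoid G where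
  add_le_add_left b c h a := by
    rw [add_comm b, add_comm c]
    exact add_le_add_left' h a

instance : ZeroLEOneClass G := ⟨Or.inl zero_lt_one⟩

instance : NeZero (1 : G) := ⟨fun h => one_ne_zero (congrArg ChangGroup.int h)⟩

lemma nsmul_one (n : ℕ) : n • (1 : G) = ⟨n, M.zero, hnt⟩ := by
  induction n with
  | zero => rfl
  | succ n ih => rw [succ_nsmul, ih]; ext <;> simp [M.zero_oplus, hnt]

noncomputable def embed (x : A) : G := if hx : x = M.one then 1 else ⟨0, x, hx⟩

lemma embed_of_ne_one {x : A} (hx : x ≠ M.one) : (embed x : G) = ⟨0, x, hx⟩ := dif_neg hx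

lemma embed_one : (embed M.one : G) = 1 := dif_pos rfl

lemma embed_zero : (embed M.zero : G) = 0 := embed_of_ne_one hnt

lemma zero_le_embed (x : A) : 0 ≤ (embed x : G) := by
  by_cases hx : x = M.one
  · rw [hx, embed_one]; exact zero_le_one
  · rw [embed_of_ne_one hx]; exact Or.inr ⟨rfl, M.zero_le x⟩

lemma embed_le_one (x : A) : (embed x : G) ≤ 1 := by
  by_cases hx : x = M.one
  · rw [hx, embed_one]
  · rw [embed_of_ne_one hx]; exact Or.inl zero_lt_one

lemma embed_oplus (x y : A) : (embed (x ∔ y) : G) = min 1 (embed x + embed y) := by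
  by_cases hx : x = M.one
  · rw [hx, M.one_oplus, embed_one, min_eq_left (le_add_of_nonneg_right (zero_le_embed y))]
  by_cases hy : y = M.one
  · rw [hy, M.oplus_one_right, embed_one, min_eq_left (le_add_of_nonneg_left (zero_le_embed x))]
  rw [embed_of_ne_one hx, embed_of_ne_one hy]
  by_cases hxy : x ∔ y = M.one
  · rw [hxy, embed_one, min_eq_left]
    exact Or.inr ⟨by simp [hxy], M.zero_le _⟩
  · rw [embed_of_ne_one hxy, min_eq_right]
    · ext <;> simp [hxy]
    · exact Or.inl (by simp [hxy])

lemma embed_star_add (x : A) : (embed x⋆ : G) + embed x = 1 := by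
  by_cases hx : x = M.one
  · rw [hx, M.star_one, embed_zero, embed_one, zero_add]
  by_cases hx' : x = M.zero
  · rw [hx', M.star_zero, embed_zero, embed_one, add_zero]
  have hxs : x⋆ ≠ M.one := fun h => hx' (M.star_injective (h.trans M.star_zero.symm))
  rw [embed_of_ne_one hx, embed_of_ne_one hxs]
  ext <;> simp [M.star_oplus_self, M.odot_comm _ x, M.odot_star_self]

lemma embed_injective : Function.Injective (embed : A → G) := by
  intro x y hxy
  by_cases hx : x = M.one <;> by_cases hy : y = M.one
  · rw [hx, hy]
  · rw [hx, embed_one, embed_of_ne_one hy] at hxy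
    exact absurd (congrArg ChangGroup.int hxy) one_ne_zero
  · rw [hy, embed_one, embed_of_ne_one hx] at hxy
    exact absurd (congrArg ChangGroup.int hxy) zero_ne_one
  · rw [embed_of_ne_one hx, embed_of_ne_one hy] at hxy
    exact congrArg ChangGroup.frac hxy

lemma embed_nsmul_le (n : ℕ) (x : A) : (embed (M.nsmul n x) : G) ≤ n • embed x := by
  induction n with
  | zero => rw [zero_nsmul, MVAlg.nsmul, embed_zero]
  | succ n ih =>
    rw [MVAlg.nsmul, embed_oplus, succ_nsmul']
    exact min_le_of_right_le (by gcongr)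

lemma le_nsmul_one (g : G) : g ≤ (g.int.toNat + 1) • (1 : G) := by
  rw [nsmul_one]
  exact Or.inl (by push_cast; omega)

lemma one_le_nsmul_of_pos (hs : M.IsSimple) {y : G} (hy : 0 < y) : ∃ n : ℕ, 1 ≤ n • y := by
  by_cases hint : 1 ≤ y.int
  · refine ⟨1, (one_nsmul y).symm ▸ le_def.2 ?_⟩
    rcases hint.lt_or_eq with h | h
    exacts [Or.inl h, Or.inr ⟨h, M.zero_le _⟩]
  have hint0 : y.int = 0 := by
    rcases le_def.1 hy.le with h | ⟨h, -⟩ <;> simp at h <;> omega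
  have hfrac : y.frac ≠ M.zero := fun h => hy.ne (ChangGroup.ext hint0.symm h.symm)
  have hy_eq : y = embed y.frac := by
    rw [embed_of_ne_one y.frac_ne_one]; exact ChangGroup.ext hint0 rfl
  obtain ⟨n, hn⟩ := hs.exists_nsmul_eq_one _ hfrac
  refine ⟨n, ?_⟩
  calc (1 : G) = embed (M.nsmul n y.frac) := by rw [hn, embed_one]
    _ ≤ n • embed y.frac := embed_nsmul_le n y.frac
    _ = n • y := by rw [← hy_eq]

theorem archimedean (hs : M.IsSimple) : Archimedean G := by
  refine ⟨fun g y hy => ?_⟩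
  obtain ⟨n, hn⟩ := one_le_nsmul_of_pos hs hy
  exact ⟨(g.int.toNat + 1) * n,
    (le_nsmul_one g).trans (by rw [mul_nsmul']; exact nsmul_le_nsmul_right hn _)⟩

end ChangGroup

end MVAlg

section Standard

open unitInterval

def MVAlg.standard : MVAlg unitInterval where
  oplus x y := ⟨min 1 (x + y), le_min zero_le_one (add_nonneg x.2.1 y.2.1), min_le_left _ _⟩
  star := symm
  zero := 0
  oplus_comm x y := Subtype.ext <| by simp only [add_comm]
  oplus_assoc x y z := Subtype.ext <| by
    simp only [min_def]; split_ifs <;> linarith [x.2.1, y.2.1, z.2.1]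
  oplus_zero x := Subtype.ext <| by simp [x.2.2]
  star_star := symm_symm
  oplus_one x := Subtype.ext <| by simp [x.2.1]
  luk x y := Subtype.ext <| by
    simp only [coe_symm_eq, min_def]; split_ifs <;> linarith [x.2.1, y.2.1, x.2.2, y.2.2]

lemma MVAlg.coe_standard_oplus (x y : unitInterval) :
    (MVAlg.standard.oplus x y : ℝ) = min 1 ((x : ℝ) + y) := rfl

lemma MVAlg.coe_standard_star (x : unitInterval) : (MVAlg.standard.star x : ℝ) = 1 - x := rfl

lemma MVAlg.standard_one : MVAlg.standard.one = 1 := symm_zero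

lemma MVAlg.standard_le_iff {x y : unitInterval} : MVAlg.standard.le x y ↔ x ≤ y := by
  rw [MVAlg.le, MVAlg.standard_one, ← Subtype.coe_inj, MVAlg.coe_standard_oplus,
    MVAlg.coe_standard_star, Set.Icc.coe_one, min_eq_left_iff, ← Subtype.coe_le_coe]
  constructor <;> intro h <;> linarith

lemma MVAlg.standard_le_star_iff {x y : unitInterval} :
    MVAlg.standard.le x (MVAlg.standard.star y) ↔ (x : ℝ) + y ≤ 1 := by
  rw [MVAlg.standard_le_iff, ← Subtype.coe_le_coe, MVAlg.coe_standard_star]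
  constructor <;> intro h <;> linarith

lemma MVAlg.coe_standard_nsmul (n : ℕ) (x : unitInterval) :
    (MVAlg.standard.nsmul n x : ℝ) = min 1 (n * (x : ℝ)) := by
  induction n with
  | zero => simp [MVAlg.nsmul, MVAlg.standard]
  | succ n ih =>
    rw [MVAlg.nsmul, MVAlg.coe_standard_oplus, ih, Nat.cast_succ]
    simp only [min_def]; split_ifs <;> nlinarith [x.2.1]

def PMVAlg.standard : PMVAlg unitInterval where
  toMVAlg := MVAlg.standard
  mul x y := x * y
  mul_assoc := _root_.mul_assoc
  mul_comm := _root_.mul_comm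
  mul_one x := by rw [MVAlg.standard_one, _root_.mul_one]
  mul_linear_right x y z h := Subtype.ext <| by
    simp only [Set.Icc.coe_mul, MVAlg.coe_standard_oplus,
      min_eq_right (MVAlg.standard_le_star_iff.1 h)]
    rw [min_eq_right (by nlinarith [x.2.2, y.2.1, z.2.1, MVAlg.standard_le_star_iff.1 h])]
    ring
  mul_linear_left x y z h := Subtype.ext <| by
    simp only [Set.Icc.coe_mul, MVAlg.coe_standard_oplus,
      min_eq_right (MVAlg.standard_le_star_iff.1 h)]
    rw [min_eq_right (by nlinarith [z.2.2, x.2.1, y.2.1, MVAlg.standard_le_star_iff.1 h])]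
    ring

end Standard

section Pi

variable {ι : Type w} {X : ι → Type v}

def MVAlg.pi (M : ∀ i, MVAlg (X i)) : MVAlg (∀ i, X i) where
  oplus f g i := (M i).oplus (f i) (g i)
  star f i := (M i).star (f i)
  zero i := (M i).zero
  oplus_comm _ _ := funext fun i => (M i).oplus_comm _ _
  oplus_assoc _ _ _ := funext fun i => (M i).oplus_assoc _ _ _
  oplus_zero _ := funext fun i => (M i).oplus_zero _
  star_star _ := funext fun i => (M i).star_star _
  oplus_one _ := funext fun i => (M i).oplus_one _
  luk _ _ := funext fun i => (M i).luk _ _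

lemma MVAlg.pi_le_iff {M : ∀ i, MVAlg (X i)} {f g : ∀ i, X i} :
    (MVAlg.pi M).le f g ↔ ∀ i, (M i).le (f i) (g i) :=
  funext_iff

lemma MVHom.pi {A : Type u} {M : MVAlg A} {N : ∀ i, MVAlg (X i)} {f : ∀ i, A → X i}
    (hf : ∀ i, MVHom M (N i) (f i)) : MVHom M (MVAlg.pi N) fun x i => f i x :=
  ⟨fun x y => funext fun i => (hf i).1 x y, fun x => funext fun i => (hf i).2.1 x,
    funext fun i => (hf i).2.2⟩

lemma MVHom.eval (N : ∀ i, MVAlg (X i)) (i : ι) : MVHom (MVAlg.pi N) (N i) fun f => f i :=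
  ⟨fun _ _ => rfl, fun _ => rfl, rfl⟩

def PMVAlg.pi (P : ∀ i, PMVAlg (X i)) : PMVAlg (∀ i, X i) where
  toMVAlg := MVAlg.pi fun i => (P i).toMVAlg
  mul f g i := (P i).mul (f i) (g i)
  mul_assoc _ _ _ := funext fun i => (P i).mul_assoc _ _ _
  mul_comm _ _ := funext fun i => (P i).mul_comm _ _
  mul_one _ := funext fun i => (P i).mul_one _
  mul_linear_right _ _ _ hgh :=
    funext fun i => (P i).mul_linear_right _ _ _ (MVAlg.pi_le_iff.1 hgh i)
  mul_linear_left _ _ _ hfg :=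
    funext fun i => (P i).mul_linear_left _ _ _ (MVAlg.pi_le_iff.1 hfg i)

end Pi

namespace MVAlg

variable {A : Type u} {M : MVAlg A}

lemma IsIdeal.nsmul_mem {I : Set A} (hI : M.IsIdeal I) {x : A} (hx : x ∈ I) (n : ℕ) :
    M.nsmul n x ∈ I := by
  induction n with
  | zero => exact hI.1
  | succ n ih => exact hI.2.1 _ hx _ ih

section Kernel

variable {h : A → unitInterval}

theorem isIdeal_ker (hh : MVHom M MVAlg.standard h) : M.IsIdeal {x | h x = 0} := by
  refine ⟨hh.2.2, fun x hx y hy => ?_, fun x y hxy hy => ?_⟩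
  · change h _ = 0 at hx hy ⊢
    rw [hh.1, hx, hy]
    exact Subtype.ext (by simp [MVAlg.coe_standard_oplus])
  · change h _ = 0 at hy ⊢
    exact _root_.le_antisymm (hy ▸ MVAlg.standard_le_iff.1 (hh.map_le hxy)) (h x).2.1

theorem isMaximalIdeal_ker (hh : MVHom M MVAlg.standard h) :
    M.IsMaximalIdeal {x | h x = 0} := by
  refine ⟨isIdeal_ker hh, fun htop => ?_, fun J hJ hJtop hsub => ?_⟩
  · have h1 : M.one ∈ {x | h x = 0} := htop ▸ Set.mem_univ M.one
    change h M.one = 0 at h1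
    rw [hh.map_one, MVAlg.standard_one] at h1
    exact one_ne_zero h1
  · refine Set.Subset.antisymm (fun x hxJ => ?_) hsub
    by_contra hx
    have hpos : (0 : ℝ) < h x := lt_of_le_of_ne (h x).2.1 (fun h0 => hx (Subtype.ext h0.symm))
    obtain ⟨n, hn⟩ := Archimedean.arch (1 : ℝ) hpos
    have hnx : h (M.nsmul n x) = 1 := Subtype.ext <| by
      rw [hh.map_nsmul, MVAlg.coe_standard_nsmul, Set.Icc.coe_one, min_eq_left (by simpa using hn)]
    have hstar : M.star (M.nsmul n x) ∈ J := hsub <| by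
      change h _ = 0
      rw [hh.2.1, hnx, ← MVAlg.standard_one, MVAlg.standard.star_one]; rfl
    refine hJtop (Set.eq_univ_of_forall fun w => hJ.2.2 _ _ (M.le_one w) ?_)
    rw [← M.oplus_star_self (M.nsmul n x)]
    exact hJ.2.1 _ (hJ.nsmul_mem hxJ n) _ hstar

end Kernel

variable {ι : Type w} {h : ι → A → unitInterval}

theorem semisimple_of_separating (hh : ∀ i, MVHom M MVAlg.standard (h i))
    (hsep : ∀ x, (∀ i, h i x = 0) → x = M.zero) : M.Semisimple := by
  refine Set.eq_singleton_iff_unique_mem.2 ⟨fun I hI => hI.1.1, fun x hx => hsep x fun i => ?_⟩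
  exact hx _ (isMaximalIdeal_ker (hh i))

theorem injective_of_separating (hh : ∀ i, MVHom M MVAlg.standard (h i))
    (hsep : ∀ x, (∀ i, h i x = 0) → x = M.zero) : Function.Injective fun x i => h i x := by
  have hle : ∀ x y, (∀ i, h i x = h i y) → M.le x y := fun x y hxy =>
    M.le_iff_sub_eq_zero.2 <| hsep _ fun i => by
      rw [(hh i).map_sub, hxy, MVAlg.standard.sub_self]; rfl
  intro x y hxy
  have hxy' : ∀ i, h i x = h i y := fun i => congrFun hxy i
  exact M.le_antisymm (hle x y hxy') (hle y x fun i => (hxy' i).symm)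

theorem IsSimple.exists_injective_mvHom_standard (hs : M.IsSimple) :
    ∃ h : A → unitInterval, MVHom M MVAlg.standard h ∧ Function.Injective h := by
  let G := M.ChangGroup hs.isChain hs.zero_ne_one
  have : Archimedean G := ChangGroup.archimedean hs
  let φ := Archimedean.embedReal G
  have hφ : Monotone φ := OrderHomClass.mono φ
  have hφe : ∀ x, φ (ChangGroup.embed x) ∈ unitInterval := fun x =>
    ⟨by simpa using hφ (ChangGroup.zero_le_embed x),
      by simpa [φ] using hφ (ChangGroup.embed_le_one x)⟩
  refine ⟨fun x => ⟨φ (ChangGroup.embed x), hφe x⟩, ⟨fun x y => Subtype.ext ?_,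
    fun x => Subtype.ext ?_, Subtype.ext ?_⟩, fun x y hxy => ChangGroup.embed_injective
      (Archimedean.embedReal_injective G (congrArg Subtype.val hxy))⟩
  · change φ (ChangGroup.embed (M.oplus x y)) =
      min 1 (φ (ChangGroup.embed x) + φ (ChangGroup.embed y))
    rw [ChangGroup.embed_oplus, hφ.map_inf, map_add, Archimedean.embedReal_one]
  · change φ (ChangGroup.embed (M.star x)) = 1 - φ (ChangGroup.embed x)
    have h := congrArg φ (ChangGroup.embed_star_add (hc := hs.isChain) x)
    rw [map_add, Archimedean.embedReal_one] at h
    linarith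
  · change φ (ChangGroup.embed M.zero) = 0
    rw [ChangGroup.embed_zero, map_zero]

theorem IsMaximalIdeal.exists_mvHom_standard_ker_eq {I : Set A} (hmax : M.IsMaximalIdeal I) :
    ∃ h : A → unitInterval, MVHom M MVAlg.standard h ∧ ∀ x, h x = 0 ↔ x ∈ I := by
  obtain ⟨g, hg, hinj⟩ := (isSimple_quotient hmax).exists_injective_mvHom_standard
  refine ⟨g ∘ Quotient.mk _, hg.comp (M.mvHom_quotient_mk hmax.1), fun x => ?_⟩
  change g _ = MVAlg.standard.zero ↔ _
  rw [← hg.2.2, hinj.eq_iff]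
  exact M.quotient_mk_eq_zero_iff hmax.1

end MVAlg

theorem PMVAlg.semisimple_pi_standard (ι : Type w) :
    (PMVAlg.pi fun _ : ι => PMVAlg.standard).Semisimple :=
  MVAlg.semisimple_of_separating (MVHom.eval _) fun _ hf => funext hf

/-- Every semisimple MV-algebra admits an injective MV-algebra homomorphism
into a unital commutative semisimple PMV-algebra. -/
theorem stmt4 {A : Type u} (M : MVAlg A) (hM : M.Semisimple) :
    ∃ (B : Type u) (P : PMVAlg B) (f : A → B),
      P.Semisimple ∧ MVHom M P.toMVAlg f ∧ Function.Injective f := by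
  choose h hh hker using fun I : {I : Set A // M.IsMaximalIdeal I} =>
    I.2.exists_mvHom_standard_ker_eq
  have hsep : ∀ x, (∀ I, h I x = 0) → x = M.zero := fun x hx => by
    have hx' : x ∈ {x | ∀ I, M.IsMaximalIdeal I → x ∈ I} := fun I hI =>
      (hker ⟨I, hI⟩ x).1 (hx _)
    rwa [hM] at hx'
  exact ⟨_, PMVAlg.pi fun _ => PMVAlg.standard, fun x I => h I x,
    PMVAlg.semisimple_pi_standard _, MVHom.pi hh, MVAlg.injective_of_separating hh hsep⟩
end
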